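/- Let F be an asymmetric norm on ℝ² with anisotropy ratio κ(F), and let u, v ∈ ℝ² ∖ {0}. If ⟨u,v⟩ ≥ 0 and κ(F)·|det(u,v)| ≤ ‖u‖·‖v‖ (i.e. κ(F)·sin|∠(u,v)| ≤ 1), then u and v form an F-acute angle. -/

import Mathlib

open scoped RealInnerProductSpace
open MeasureTheory Real

noncomputable section

abbrev E2 : Type := EuclideanSpace ℝ (Fin 2)

def mk2 (a b : ℝ) : E2 := !₂[a, b]

def IsAsymNorm (F : E2 → ℝ) : Prop :=
  ConvexOn ℝ Set.univ F ∧
  (∀ (c : ℝ), 0 ≤ c → ∀ u : E2, F (c • u) = c * F u) ∧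
  (∀ u : E2, 0 ≤ F u) ∧
  (∀ u : E2, u ≠ 0 → 0 < F u)

def IsAcute (F : E2 → ℝ) (u v : E2) : Prop :=
  ∀ δ : ℝ, 0 ≤ δ → F u ≤ F (u + δ • v) ∧ F v ≤ F (v + δ • u)

noncomputable def kappa (F : E2 → ℝ) : ℝ :=
  sSup {r : ℝ | ∃ u v : E2, ‖u‖ = 1 ∧ ‖v‖ = 1 ∧ r = F u / F v}

def det2 (u v : E2) : ℝ := u 0 * v 1 - u 1 * v 0

def IsIntVec (u : E2) : Prop := (∃ n : ℤ, u 0 = (n : ℝ)) ∧ (∃ n : ℤ, u 1 = (n : ℝ))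

def eTheta (θ : ℝ) : E2 := mk2 (Real.cos θ) (Real.sin θ)

noncomputable def phiF (F : E2 → ℝ) (θ : ℝ) : ℝ :=
  Real.arctan (det2 (eTheta θ) (gradient F (eTheta θ)) / F (eTheta θ))

def rot2 (θ : ℝ) (w : E2) : E2 :=
  mk2 (Real.cos θ * w 0 - Real.sin θ * w 1) (Real.sin θ * w 0 + Real.cos θ * w 1)

def perp (z : E2) : E2 := mk2 (-(z 1)) (z 0)

/-! A supporting functional of `F` at `u` is a vector `w` with `⟪w, u⟫ = F u` and `⟪w, ·⟫ ≤ F`;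
then `F (u + δ • v) ≥ F u + δ ⟪w, v⟫`, so it suffices that `⟪w, v⟫ ≥ 0`.
If `m ‖·‖ ≤ F ≤ M ‖·‖` with `M ≤ κ(F) m`, then `⟪w, u⟫ ≥ m ‖u‖` and `‖w‖ ≤ M`, so the
component of `w` along `perp u` is at most `√(M² - m²) ‖u‖`. Writing
`‖u‖² v = ⟪u, v⟫ u + det(u, v) perp u`, the angle condition `κ sin ≤ 1` gives
`(κ² - 1) sin² ≤ cos²`, which is exactly what makes the `perp u` part of `⟪w, v⟫`
dominated by the `u` part. -/

lemma inner_eq_coords (x y : E2) : ⟪x, y⟫ = x 0 * y 0 + x 1 * y 1 := by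
  simp [PiLp.inner_apply, Fin.sum_univ_two, mul_comm]

lemma norm_sq_eq_coords (x : E2) : ‖x‖ ^ 2 = x 0 ^ 2 + x 1 ^ 2 := by
  rw [← real_inner_self_eq_norm_sq, inner_eq_coords]; ring

lemma det2_swap (u v : E2) : det2 v u = -det2 u v := by
  unfold det2; ring

lemma inner_sq_add_det2_sq (u v : E2) : ⟪u, v⟫ ^ 2 + det2 u v ^ 2 = (‖u‖ * ‖v‖) ^ 2 := by
  rw [mul_pow, norm_sq_eq_coords, norm_sq_eq_coords, inner_eq_coords, det2]; ring

lemma inner_perp (w u : E2) : ⟪w, perp u⟫ = det2 u w := by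
  simp [inner_eq_coords, perp, mk2, det2]; ring

lemma norm_sq_smul_eq_inner_smul_add_det2_smul_perp (u v : E2) :
    ‖u‖ ^ 2 • v = ⟪u, v⟫ • u + det2 u v • perp u := by
  ext i
  fin_cases i <;> simp [norm_sq_eq_coords, inner_eq_coords, det2, perp, mk2] <;> ring

lemma mul_add_mul_nonneg_of_sq_add_sq_le {p d r a b m M n : ℝ} (hp : 0 ≤ p) (hm : 0 ≤ m)
    (hM : 0 ≤ M) (hn : 0 ≤ n) (hpd : p ^ 2 + d ^ 2 = r ^ 2) (hd : M * |d| ≤ m * r)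
    (ha : m * n ≤ a) (hab : a ^ 2 + b ^ 2 ≤ (M * n) ^ 2) :
    0 ≤ p * a + d * b := by
  have hMd : M ^ 2 * d ^ 2 ≤ m ^ 2 * (p ^ 2 + d ^ 2) := by
    rw [hpd, ← sq_abs d, ← mul_pow, ← mul_pow]
    exact pow_le_pow_left₀ (by positivity) hd 2
  have hmn : (m * n) ^ 2 ≤ a ^ 2 := pow_le_pow_left₀ (by positivity) ha 2
  have hdb : (d * b) ^ 2 ≤ (p * a) ^ 2 := by
    calc (d * b) ^ 2 = d ^ 2 * b ^ 2 := by ring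
      _ ≤ d ^ 2 * ((M ^ 2 - m ^ 2) * n ^ 2) :=
        mul_le_mul_of_nonneg_left (by nlinarith) (sq_nonneg d)
      _ = (M ^ 2 * d ^ 2 - m ^ 2 * d ^ 2) * n ^ 2 := by ring
      _ ≤ m ^ 2 * p ^ 2 * n ^ 2 := by gcongr; linarith
      _ = p ^ 2 * (m * n) ^ 2 := by ring
      _ ≤ p ^ 2 * a ^ 2 := mul_le_mul_of_nonneg_left hmn (sq_nonneg p)
      _ = (p * a) ^ 2 := by ring
  have hpa : 0 ≤ p * a := mul_nonneg hp ((mul_nonneg hm hn).trans ha)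
  linarith [(abs_le_of_sq_le_sq' hdb hpa).1]

lemma inner_nonneg_of_inner_ge_of_norm_le {u v w : E2} {m M : ℝ} (hu : u ≠ 0) (hm : 0 ≤ m)
    (hwu : m * ‖u‖ ≤ ⟪w, u⟫) (hwM : ‖w‖ ≤ M) (hs : 0 ≤ ⟪u, v⟫)
    (hd : M * |det2 u v| ≤ m * (‖u‖ * ‖v‖)) :
    0 ≤ ⟪w, v⟫ := by
  have hdecomp : ‖u‖ ^ 2 * ⟪w, v⟫ = ⟪u, v⟫ * ⟪w, u⟫ + det2 u v * ⟪w, perp u⟫ := by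
    simpa only [inner_smul_right, inner_add_right] using
      congrArg (⟪w, ·⟫) (norm_sq_smul_eq_inner_smul_add_det2_smul_perp u v)
  have hperp : ⟪w, u⟫ ^ 2 + ⟪w, perp u⟫ ^ 2 ≤ (M * ‖u‖) ^ 2 := by
    rw [inner_perp, real_inner_comm, inner_sq_add_det2_sq, mul_comm]
    gcongr
  refine nonneg_of_mul_nonneg_right ?_ (by positivity : 0 < ‖u‖ ^ 2)
  rw [hdecomp]
  exact mul_add_mul_nonneg_of_sq_add_sq_le hs hm ((norm_nonneg w).trans hwM) (norm_nonneg u)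
    (inner_sq_add_det2_sq u v) hd hwu hperp

namespace IsAsymNorm

variable {F : E2 → ℝ}

lemma map_zero (hF : IsAsymNorm F) : F 0 = 0 := by
  simpa using hF.2.1 0 le_rfl 0

lemma add_le (hF : IsAsymNorm F) (x y : E2) : F (x + y) ≤ F x + F y := by
  have hmid := hF.1.2 (Set.mem_univ x) (Set.mem_univ y) (by norm_num : (0 : ℝ) ≤ 1 / 2)
    (by norm_num : (0 : ℝ) ≤ 1 / 2) (by norm_num)
  have hxy : x + y = (2 : ℝ) • ((1 / 2 : ℝ) • x + (1 / 2 : ℝ) • y) := by module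
  rw [hxy, hF.2.1 2 zero_le_two]
  simp only [smul_eq_mul] at hmid
  linarith

lemma exists_inner_eq_and_forall_inner_le (hF : IsAsymNorm F) {u : E2} (hu : u ≠ 0) :
    ∃ w : E2, ⟪w, u⟫ = F u ∧ ∀ x, ⟪w, x⟫ ≤ F x := by
  let f : E2 →ₗ.[ℝ] ℝ := LinearPMap.mkSpanSingleton u (F u) hu
  have hfF : ∀ x : f.domain, f x ≤ F x := by
    rintro ⟨x, hx⟩
    obtain ⟨c, rfl⟩ := Submodule.mem_span_singleton.1 hx
    rw [LinearPMap.mkSpanSingleton'_apply, smul_eq_mul]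
    rcases le_or_gt 0 c with hc | hc
    · exact (hF.2.1 c hc u).ge
    · exact (mul_nonpos_of_nonpos_of_nonneg hc.le (hF.2.2.1 u)).trans (hF.2.2.1 _)
  obtain ⟨g, hgf, hgF⟩ :=
    exists_extension_of_le_sublinear f F (fun c hc x => hF.2.1 c hc.le x) hF.add_le hfF
  refine ⟨(InnerProductSpace.toDual ℝ E2).symm (LinearMap.toContinuousLinearMap g), ?_, ?_⟩
  · rw [InnerProductSpace.toDual_symm_apply]
    exact (hgf ⟨u, Submodule.mem_span_singleton_self u⟩).trans (LinearPMap.mkSpanSingleton_apply ..)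
  · intro x
    rw [InnerProductSpace.toDual_symm_apply]
    exact hgF x

lemma apply_eq_norm_mul (hF : IsAsymNorm F) (x : E2) : F x = ‖x‖ * F (‖x‖⁻¹ • x) := by
  rcases eq_or_ne x 0 with rfl | hx
  · simp [hF.map_zero]
  · rw [← hF.2.1 _ (norm_nonneg x), smul_smul, mul_inv_cancel₀ (norm_ne_zero_iff.2 hx), one_smul]

lemma exists_mul_norm_bounds_with_ratio_le_kappa (hF : IsAsymNorm F) :
    ∃ m M : ℝ, 0 < m ∧ (∀ x, m * ‖x‖ ≤ F x) ∧ (∀ x, F x ≤ M * ‖x‖) ∧ M ≤ kappa F * m := by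
  have hcont : ContinuousOn F (Metric.sphere 0 1) :=
    (hF.1.continuousOn isOpen_univ).mono (Set.subset_univ _)
  have hne : (Metric.sphere (0 : E2) 1).Nonempty := NormedSpace.sphere_nonempty.2 zero_le_one
  obtain ⟨xm, hxm, hmin⟩ := (isCompact_sphere (0 : E2) 1).exists_isMinOn hne hcont
  obtain ⟨xM, hxM, hmax⟩ := (isCompact_sphere (0 : E2) 1).exists_isMaxOn hne hcont
  rw [mem_sphere_zero_iff_norm] at hxm hxM
  have hsphere (x : E2) (hx : x ≠ 0) : ‖x‖⁻¹ • x ∈ Metric.sphere (0 : E2) 1 := by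
    rw [mem_sphere_zero_iff_norm, norm_smul, norm_inv, norm_norm,
      inv_mul_cancel₀ (norm_ne_zero_iff.2 hx)]
  have hlow (x : E2) : F xm * ‖x‖ ≤ F x := by
    rcases eq_or_ne x 0 with rfl | hx
    · simp [hF.map_zero]
    · rw [hF.apply_eq_norm_mul x, mul_comm]
      exact mul_le_mul_of_nonneg_left (hmin (hsphere x hx)) (norm_nonneg x)
  have hhigh (x : E2) : F x ≤ F xM * ‖x‖ := by
    rcases eq_or_ne x 0 with rfl | hx
    · simp [hF.map_zero]
    · rw [hF.apply_eq_norm_mul x, mul_comm (F xM)]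
      exact mul_le_mul_of_nonneg_left (hmax (hsphere x hx)) (norm_nonneg x)
  have hm : 0 < F xm := hF.2.2.2 xm (norm_ne_zero_iff.1 (by rw [hxm]; exact one_ne_zero))
  refine ⟨F xm, F xM, hm, hlow, hhigh, (div_le_iff₀ hm).1 (le_csSup ⟨F xM / F xm, ?_⟩
    ⟨xM, xm, hxM, hxm, rfl⟩)⟩
  rintro r ⟨x, y, hx, hy, rfl⟩
  refine div_le_div₀ (hF.2.2.1 xM) ?_ hm ?_
  · simpa [hx] using hhigh x
  · simpa [hy] using hlow y

lemma le_apply_add_smul (hF : IsAsymNorm F) {u v : E2} (hu : u ≠ 0) (hs : 0 ≤ ⟪u, v⟫)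
    (hκ : kappa F * |det2 u v| ≤ ‖u‖ * ‖v‖) {δ : ℝ} (hδ : 0 ≤ δ) :
    F u ≤ F (u + δ • v) := by
  obtain ⟨m, M, hm, hlow, hhigh, hMκ⟩ := hF.exists_mul_norm_bounds_with_ratio_le_kappa
  obtain ⟨w, hwu, hwF⟩ := hF.exists_inner_eq_and_forall_inner_le hu
  have hw : w ≠ 0 := by
    rintro rfl
    exact (hF.2.2.2 u hu).ne (by simpa using hwu)
  have hwM : ‖w‖ ≤ M := by
    refine le_of_mul_le_mul_right ?_ (norm_pos_iff.2 hw)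
    calc ‖w‖ * ‖w‖ = ⟪w, w⟫ := (real_inner_self_eq_norm_mul_norm w).symm
      _ ≤ F w := hwF w
      _ ≤ M * ‖w‖ := hhigh w
  have hd : M * |det2 u v| ≤ m * (‖u‖ * ‖v‖) :=
    calc M * |det2 u v| ≤ kappa F * m * |det2 u v| := by gcongr
      _ = m * (kappa F * |det2 u v|) := by ring
      _ ≤ m * (‖u‖ * ‖v‖) := by gcongr
  have hwv := inner_nonneg_of_inner_ge_of_norm_le hu hm.le (hwu ▸ hlow u) hwM hs hd
  calc F u = ⟪w, u⟫ := hwu.symm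
    _ ≤ ⟪w, u⟫ + δ * ⟪w, v⟫ := le_add_of_nonneg_right (mul_nonneg hδ hwv)
    _ = ⟪w, u + δ • v⟫ := by rw [inner_add_right, inner_smul_right]
    _ ≤ F (u + δ • v) := hwF _

end IsAsymNorm

/-- if `⟨u,v⟩ ≥ 0` and `κ(F)·|det(u,v)| ≤ ‖u‖·‖v‖`
(i.e. `κ(F)·sin|∠(u,v)| ≤ 1`), then `u` and `v` form an `F`-acute angle. -/
theorem stmt5 (F : E2 → ℝ) (hF : IsAsymNorm F) (u v : E2) (hu : u ≠ 0) (hv : v ≠ 0)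
    (hs : 0 ≤ ⟪u, v⟫) (hκ : kappa F * |det2 u v| ≤ ‖u‖ * ‖v‖) :
    IsAcute F u v := by
  intro δ hδ
  refine ⟨hF.le_apply_add_smul hu hs hκ hδ, hF.le_apply_add_smul hv ?_ ?_ hδ⟩
  · rwa [real_inner_comm]
  · rwa [det2_swap, abs_neg, mul_comm ‖v‖]

end
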